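/- arXiv:1603.07799 — 8 statements merged into one kernel-verified Lean document; each statement's English description precedes it below -/
import Mathlib

section
/- Let λ be a nonzero real number, let F : (-1, ∞) → ℝ be defined by F(t) = 1/((1+t)^λ + 1), and let a_k(N;λ) be the recursively defined coefficients. Then for every integer N ≥ 1, F is N times differentiable on (-1, ∞) and for all t > -1 the N-th derivative satisfies F^(N)(t) = ((−1)^N · λ/(1+t)^N) · Σ_{i=1}^{N+1} a_{i-1}(N;λ) · F(t)^i. -/
/-!
With `G t = ((1 + t) ^ λ + 1)⁻¹` one has `G' = -λ/(1 + t) · (G - G²)`. Hence differentiating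
`(1 + t)^(-N) · P(G)` for a polynomial `P` gives `-(1 + t)^(-(N+1))` times
`N P + λ (X - X²) P'` evaluated at `G`, and for `P = Σ a_k(N;λ) X^(k+1)` the recursion defining
the coefficients is exactly the coefficient form of this identity. The value `a_0(0;λ) = 1/λ`
makes the formula at `N = 0` read `F = G`, so the induction starts at `N = 0`.
-/

open Finset

theorem eqOn_iteratedDeriv_of_hasDerivAt {𝕜 E : Type*} [NontriviallyNormedField 𝕜]
    [NormedAddCommGroup E] [NormedSpace 𝕜 E] {U : Set 𝕜} (hU : IsOpen U) {g : 𝕜 → E}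
    {f : ℕ → 𝕜 → E} (h0 : Set.EqOn g (f 0) U)
    (hf : ∀ n, ∀ t ∈ U, HasDerivAt (f n) (f (n + 1) t) t) (n : ℕ) :
    Set.EqOn (iteratedDeriv n g) (f n) U := by
  induction n with
  | zero => simpa using h0
  | succ n ih =>
    intro t ht
    rw [iteratedDeriv_succ, (ih.eventuallyEq_of_mem (hU.mem_nhds ht)).deriv_eq,
      (hf n t ht).deriv]

noncomputable def booleFun (lam t : ℝ) : ℝ := ((1 + t) ^ lam + 1)⁻¹

theorem hasDerivAt_booleFun (lam : ℝ) {t : ℝ} (ht : 0 < 1 + t) :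
    HasDerivAt (booleFun lam)
      (-lam / (1 + t) * (booleFun lam t - booleFun lam t ^ 2)) t := by
  have hpow : HasDerivAt (fun s : ℝ => (1 + s) ^ lam) (lam * (1 + t) ^ (lam - 1)) t := by
    simpa using ((hasDerivAt_id t).const_add 1).rpow_const (p := lam) (Or.inl ht.ne')
  have hden : (1 + t) ^ lam + 1 ≠ 0 := by positivity
  refine ((hpow.add_const 1).inv hden).congr_deriv ?_
  rw [Real.rpow_sub_one ht.ne', booleFun]
  field_simp
  ring

noncomputable def booleSum (a : ℕ → ℕ → ℝ) (N : ℕ) (x : ℝ) : ℝ :=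
  ∑ k ∈ range (N + 1), a k N * x ^ (k + 1)

theorem booleSum_eq_sum_Icc (a : ℕ → ℕ → ℝ) (N : ℕ) (x : ℝ) :
    booleSum a N x = ∑ i ∈ Icc 1 (N + 1), a (i - 1) N * x ^ i := by
  rw [← Ico_add_one_right_eq_Icc, sum_Ico_eq_sum_range, booleSum]
  simp [add_comm]

theorem hasDerivAt_booleSum_comp (a : ℕ → ℕ → ℝ) (N : ℕ) {g : ℝ → ℝ} {c t : ℝ}
    (hg : HasDerivAt g (c * (g t - g t ^ 2)) t) :
    HasDerivAt (fun s => booleSum a N (g s))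
      (c * ∑ k ∈ range (N + 1), ((k : ℝ) + 1) * a k N * (g t ^ (k + 1) - g t ^ (k + 2)))
      t := by
  unfold booleSum
  rw [mul_sum]
  refine HasDerivAt.fun_sum fun k _ => ((hg.pow (k + 1)).const_mul (a k N)).congr_deriv ?_
  push_cast
  ring

/-- `a k N` is `a_k(N;λ)`; `mid` is the paper's middle recursion with `i = k + 2`. -/
structure BooleRecurrence (lam : ℝ) (a : ℕ → ℕ → ℝ) (N : ℕ) : Prop where
  top : a 0 (N + 1) = (N + lam) * a 0 N
  bot : a (N + 1) (N + 1) = -((N + 1) * lam) * a N N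
  mid : ∀ k < N, a (k + 1) (N + 1) =
    -(((k : ℝ) + 1) * lam) * a k N + (N + ((k : ℝ) + 2) * lam) * a (k + 1) N

theorem BooleRecurrence.booleSum_succ {lam : ℝ} {a : ℕ → ℕ → ℝ} {N : ℕ}
    (h : BooleRecurrence lam a N) (x : ℝ) :
    N * booleSum a N x +
        lam * ∑ k ∈ range (N + 1), ((k : ℝ) + 1) * a k N * (x ^ (k + 1) - x ^ (k + 2)) =
      booleSum a (N + 1) x := by
  set A : ℕ → ℝ := fun k => (N + ((k : ℝ) + 1) * lam) * a k N * x ^ (k + 1)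
  set B : ℕ → ℝ := fun k => ((k : ℝ) + 1) * lam * a k N * x ^ (k + 2)
  have hmid : ∀ k ∈ range N, a (k + 1) (N + 1) * x ^ (k + 1 + 1) = A (k + 1) - B k := by
    intro k hk
    simp only [A, B, h.mid k (mem_range.1 hk)]
    push_cast
    ring
  calc N * booleSum a N x +
        lam * ∑ k ∈ range (N + 1), ((k : ℝ) + 1) * a k N * (x ^ (k + 1) - x ^ (k + 2))
      = ∑ k ∈ range (N + 1), A k - ∑ k ∈ range (N + 1), B k := by
        rw [booleSum, mul_sum, mul_sum, ← sum_sub_distrib, ← sum_add_distrib]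
        exact sum_congr rfl fun k _ => by ring
    _ = booleSum a (N + 1) x := by
        rw [sum_range_succ' A, sum_range_succ B, booleSum, sum_range_succ, sum_range_succ',
          sum_congr rfl hmid, sum_sub_distrib, h.top, h.bot]
        simp only [A, B]
        push_cast
        ring

noncomputable def booleDeriv (lam : ℝ) (a : ℕ → ℕ → ℝ) (N : ℕ) (t : ℝ) : ℝ :=
  (-1) ^ N * lam / (1 + t) ^ N * booleSum a N (booleFun lam t)

theorem BooleRecurrence.hasDerivAt_booleDeriv {lam : ℝ} {a : ℕ → ℕ → ℝ} {N : ℕ}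
    (h : BooleRecurrence lam a N) {t : ℝ} (ht : 0 < 1 + t) :
    HasDerivAt (booleDeriv lam a N) (booleDeriv lam a (N + 1) t) t := by
  have hzpow : HasDerivAt (fun s : ℝ => (1 + s) ^ (-(N : ℤ)))
      (-(N : ℝ) * (1 + t) ^ (-(N : ℤ) - 1)) t := by
    have := (hasDerivAt_zpow (-(N : ℤ)) (1 + t) (Or.inl ht.ne')).comp t
      ((hasDerivAt_id t).const_add 1)
    simp only [mul_one, Int.cast_neg, Int.cast_natCast] at this
    exact this
  have hS := hasDerivAt_booleSum_comp a N (hasDerivAt_booleFun lam ht)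
  have hfun : booleDeriv lam a N =
      fun s => (-1) ^ N * lam * ((1 + s) ^ (-(N : ℤ)) * booleSum a N (booleFun lam s)) := by
    funext s
    simp [booleDeriv, zpow_neg, div_eq_mul_inv, mul_assoc]
  rw [hfun]
  refine ((hzpow.mul hS).const_mul _).congr_deriv ?_
  rw [booleDeriv, ← h.booleSum_succ,
    show -(N : ℤ) - 1 = -((N + 1 : ℕ) : ℤ) by push_cast; ring,
    zpow_neg, zpow_neg, zpow_natCast, zpow_natCast]
  field_simp
  ring

theorem booleDeriv_zero {lam : ℝ} (hlam : lam ≠ 0) {a : ℕ → ℕ → ℝ}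
    (ha : a 0 0 = 1 / lam) :
    booleDeriv lam a 0 = booleFun lam := by
  funext t
  simp [booleDeriv, booleSum, ha, hlam]

theorem boole_higher_derivative_general (lam : ℝ) (hlam : lam ≠ 0) (F : ℝ → ℝ)
    (hF : ∀ t : ℝ, -1 < t → F t = 1 / ((1 + t) ^ lam + 1))
    (a : ℕ → ℕ → ℝ)
    (ha00 : a 0 0 = 1 / lam) (ha01 : a 0 1 = 1) (ha11 : a 1 1 = -1)
    (haTop : ∀ N : ℕ, 1 ≤ N → a 0 (N + 1) = ((N : ℝ) + lam) * a 0 N)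
    (haBot : ∀ N : ℕ, 1 ≤ N →
      a (N + 1) (N + 1) = -(((N : ℝ) + 1) * lam) * a N N)
    (haMid : ∀ N : ℕ, 1 ≤ N → ∀ i : ℕ, 2 ≤ i → i ≤ N + 1 →
      a (i - 1) (N + 1) =
        -(((i : ℝ) - 1) * lam) * a (i - 2) N + ((N : ℝ) + (i : ℝ) * lam) * a (i - 1) N)
    (N : ℕ) :
    (∀ m : ℕ, m < N → ∀ t : ℝ, -1 < t → DifferentiableAt ℝ (iteratedDeriv m F) t) ∧
    (∀ t : ℝ, -1 < t →
      iteratedDeriv N F t =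
        ((-1 : ℝ) ^ N * lam / (1 + t) ^ N) *
          ∑ i ∈ Finset.Icc 1 (N + 1), a (i - 1) N * F t ^ i) := by
  have hrec : ∀ n, BooleRecurrence lam a n := by
    rintro (_ | n)
    · exact ⟨by simp [ha01, ha00, hlam], by simp [ha11, ha00, hlam], by simp⟩
    · refine ⟨haTop (n + 1) (by omega), haBot (n + 1) (by omega), fun k hk => ?_⟩
      have := haMid (n + 1) (by omega) (k + 2) (by omega) (by omega)
      push_cast at this ⊢
      rw [this]
      ring
  have hFG : ∀ t ∈ Set.Ioi (-1 : ℝ), F t = booleDeriv lam a 0 t := fun t ht => by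
    rw [hF t ht, booleDeriv_zero hlam ha00, booleFun, one_div]
  have hderiv : ∀ n, ∀ t ∈ Set.Ioi (-1 : ℝ),
      HasDerivAt (booleDeriv lam a n) (booleDeriv lam a (n + 1) t) t :=
    fun n t ht => (hrec n).hasDerivAt_booleDeriv (by linarith [Set.mem_Ioi.1 ht])
  have hiter := eqOn_iteratedDeriv_of_hasDerivAt isOpen_Ioi hFG hderiv
  refine ⟨fun m _ t ht => ?_, fun t ht => ?_⟩
  · exact ((hiter m).eventuallyEq_of_mem (isOpen_Ioi.mem_nhds ht)).differentiableAt_iff.2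
      (hderiv m t ht).differentiableAt
  · rw [hiter N ht, booleDeriv, booleSum_eq_sum_Icc, hF t ht, booleFun, one_div]

/-- Let `λ ≠ 0` be real, `F t = 1/((1+t)^λ + 1)` on `(-1, ∞)`
(real power), and let `a k N` denote the recursively defined coefficients
`a_k(N; λ)`.  Then for every `N ≥ 1`, `F` is `N` times differentiable on
`(-1, ∞)` and `F^(N)(t) = ((-1)^N λ/(1+t)^N) · Σ_{i=1}^{N+1} a_{i-1}(N;λ) F(t)^i`. -/
theorem boole_higher_derivative (lam : ℝ) (hlam : lam ≠ 0) (F : ℝ → ℝ)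
    (hF : ∀ t : ℝ, -1 < t → F t = 1 / ((1 + t) ^ lam + 1))
    (a : ℕ → ℕ → ℝ)
    (ha00 : a 0 0 = 1 / lam) (ha01 : a 0 1 = 1) (ha11 : a 1 1 = -1)
    (haTop : ∀ N : ℕ, 1 ≤ N → a 0 (N + 1) = ((N : ℝ) + lam) * a 0 N)
    (haBot : ∀ N : ℕ, 1 ≤ N →
      a (N + 1) (N + 1) = -(((N : ℝ) + 1) * lam) * a N N)
    (haMid : ∀ N : ℕ, 1 ≤ N → ∀ i : ℕ, 2 ≤ i → i ≤ N + 1 →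
      a (i - 1) (N + 1) =
        -(((i : ℝ) - 1) * lam) * a (i - 2) N + ((N : ℝ) + (i : ℝ) * lam) * a (i - 1) N)
    (N : ℕ) (hN : 1 ≤ N) :
    (∀ m : ℕ, m < N → ∀ t : ℝ, -1 < t → DifferentiableAt ℝ (iteratedDeriv m F) t) ∧
    (∀ t : ℝ, -1 < t →
      iteratedDeriv N F t =
        ((-1 : ℝ) ^ N * lam / (1 + t) ^ N) *
          ∑ i ∈ Finset.Icc 1 (N + 1), a (i - 1) N * F t ^ i) :=
  boole_higher_derivative_general lam hlam F hF a ha00 ha01 ha11 haTop haBot haMid N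
end

section
/- Let λ be a nonzero real number and let a_k(N;λ) be the recursively defined coefficients. Then for all integers N ≥ 1 and 1 ≤ k ≤ N one has the summed recurrence a_k(N+1;λ) = −k·λ · Σ_{i=0}^{N−k+1} (N+(k+1)λ)_i · a_{k−1}(N−i;λ), where (x)_i denotes the falling factorial. -/
/-!
For `M ≥ k` the middle recurrence reads `a_k(M+1) = -kλ·a_{k-1}(M) + (M+(k+1)λ)·a_k(M)`, a
first-order inhomogeneous recurrence in `M`. Unrolling it down to the diagonal produces the
falling factorials `(N+(k+1)λ)_i`, since `(y+1)·(y)_i = (y+1)_{i+1}`, and the diagonal value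
`a_k(k) = -kλ·a_{k-1}(k-1)` supplies the last summand.
-/

open Finset Polynomial

theorem descPochhammer_eval_succ_left {R : Type*} [CommRing R] (n : ℕ) (x : R) :
    (descPochhammer R (n + 1)).eval x = x * (descPochhammer R n).eval (x - 1) := by
  simp [descPochhammer_succ_left, eval_comp]

theorem eq_sum_descPochhammer_of_recurrence {R : Type*} [CommRing R] (u v : ℕ → R) (x : R)
    (m : ℕ) (hstart : u (m + 1) = v m)
    (hstep : ∀ M, m < M → u (M + 1) = v M + (M + x) * u M) (N : ℕ) (hN : m ≤ N) :
    u (N + 1) = ∑ i ∈ range (N - m + 1), (descPochhammer R i).eval (N + x) * v (N - i) := by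
  induction N, hN using Nat.le_induction with
  | base => simp [hstart]
  | succ N hmN ih =>
    have hshift : ∀ i ∈ range (N - m + 1),
        (descPochhammer R (i + 1)).eval ((N + 1 : ℕ) + x) * v (N + 1 - (i + 1)) =
          ((N + 1 : ℕ) + x) * ((descPochhammer R i).eval (N + x) * v (N - i)) := by
      intro i _
      rw [descPochhammer_eval_succ_left, Nat.add_sub_add_right,
        show ((N + 1 : ℕ) : R) + x - 1 = N + x by push_cast; ring]
      ring
    rw [show N + 1 - m + 1 = N - m + 1 + 1 by omega, sum_range_succ' _ (N - m + 1),
      sum_congr rfl hshift, ← mul_sum, ← ih, hstep (N + 1) (by omega)]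
    simp [add_comm]

theorem boole_coeff_summed_recurrence_general (lam : ℝ) (hlam : lam ≠ 0)
    (a : ℕ → ℕ → ℝ)
    (ha00 : a 0 0 = 1 / lam) (ha11 : a 1 1 = -1)
    (haBot : ∀ N : ℕ, 1 ≤ N →
      a (N + 1) (N + 1) = -(((N : ℝ) + 1) * lam) * a N N)
    (haMid : ∀ N : ℕ, 1 ≤ N → ∀ i : ℕ, 2 ≤ i → i ≤ N + 1 →
      a (i - 1) (N + 1) =
        -(((i : ℝ) - 1) * lam) * a (i - 2) N + ((N : ℝ) + (i : ℝ) * lam) * a (i - 1) N)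
    (N k : ℕ) (hk1 : 1 ≤ k) (hkN : k ≤ N) :
    a k (N + 1) =
      -((k : ℝ) * lam) *
        ∑ i ∈ Finset.range (N - k + 2),
          (descPochhammer ℝ i).eval ((N : ℝ) + ((k : ℝ) + 1) * lam) * a (k - 1) (N - i) := by
  obtain ⟨m, rfl⟩ : ∃ m, k = m + 1 := ⟨k - 1, by omega⟩
  have hdiag : a (m + 1) (m + 1) = -(((m + 1 : ℕ) : ℝ) * lam) * a m m := by
    rcases m with _ | m
    · simp [ha11, ha00, hlam]
    · simpa using haBot (m + 1) (by omega)
  have hstep : ∀ M, m < M → a (m + 1) (M + 1) =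
      -(((m + 1 : ℕ) : ℝ) * lam) * a m M + (M + ((m + 1 : ℕ) + 1) * lam) * a (m + 1) M := by
    intro M hmM
    have h := haMid M (by omega) (m + 2) (by omega) (by omega)
    push_cast at h ⊢
    linear_combination h
  rw [mul_sum, Nat.add_sub_cancel, show N - (m + 1) + 2 = N - m + 1 by omega,
    eq_sum_descPochhammer_of_recurrence (a (m + 1)) (fun M ↦ _ * a m M) _ m hdiag hstep N
      (by omega)]
  exact sum_congr rfl fun i _ ↦ by ring

/-- For `λ ≠ 0` and the recursively defined coefficients
`a_k(N;λ)`, for all `N ≥ 1` and `1 ≤ k ≤ N` one has the summed recurrence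
`a_k(N+1;λ) = -kλ · Σ_{i=0}^{N-k+1} (N+(k+1)λ)_i · a_{k-1}(N-i;λ)`,
where `(x)_i` denotes the falling factorial (given by `descPochhammer`). -/
theorem boole_coeff_summed_recurrence (lam : ℝ) (hlam : lam ≠ 0)
    (a : ℕ → ℕ → ℝ)
    (ha00 : a 0 0 = 1 / lam) (ha01 : a 0 1 = 1) (ha11 : a 1 1 = -1)
    (haTop : ∀ N : ℕ, 1 ≤ N → a 0 (N + 1) = ((N : ℝ) + lam) * a 0 N)
    (haBot : ∀ N : ℕ, 1 ≤ N →
      a (N + 1) (N + 1) = -(((N : ℝ) + 1) * lam) * a N N)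
    (haMid : ∀ N : ℕ, 1 ≤ N → ∀ i : ℕ, 2 ≤ i → i ≤ N + 1 →
      a (i - 1) (N + 1) =
        -(((i : ℝ) - 1) * lam) * a (i - 2) N + ((N : ℝ) + (i : ℝ) * lam) * a (i - 1) N)
    (N k : ℕ) (hN : 1 ≤ N) (hk1 : 1 ≤ k) (hkN : k ≤ N) :
    a k (N + 1) =
      -((k : ℝ) * lam) *
        ∑ i ∈ Finset.range (N - k + 2),
          (descPochhammer ℝ i).eval ((N : ℝ) + ((k : ℝ) + 1) * lam) * a (k - 1) (N - i) :=
  boole_coeff_summed_recurrence_general lam hlam a ha00 ha11 haBot haMid N k hk1 hkN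
end

section
/- Let λ be a nonzero real number and let a_k(N;λ) be the recursively defined coefficients. Then for every integer N ≥ 2 one has a_2(N+1;λ) = 2!·λ² · Σ_{i₂=0}^{N−1} Σ_{i₁=0}^{N−i₂−1} (N+3λ)_{i₂} · (N+2λ−i₂−1)_{i₁} · (N+λ−i₂−i₁−2)_{N−i₂−i₁−2}, where summands with N−i₂−i₁−2 = −1 are interpreted via a_0(0;λ) = 1/λ (i.e. the falling-factorial factor of length −1 is replaced by 1/λ), and (x)_n denotes the falling factorial. -/
/-!
For fixed `k`, the sequence `N ↦ a_k(N;λ)` solves a first-order linear recurrence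
`u (N + 1) = f (N + 1) + (x + N + 1) · u N` driven by `N ↦ a_{k-1}(N;λ)`, and such a recurrence
is solved by the falling-factorial convolution `∑_{i<N} (x + N)_i · f (N - i)`. Starting from
`a_0(M+1;λ) = (M+λ)_M`, one convolution gives `a_1` up to the factor `-λ`, a second one gives
`a_2(·+1)` up to the factor `2λ²`, and unfolding both convolutions yields the double sum.
-/

open Finset Polynomial

section DescConv

variable {R : Type*} [CommRing R]

theorem descPochhammer_succ_eval_left (n : ℕ) (x : R) :
    (descPochhammer R (n + 1)).eval x = x * (descPochhammer R n).eval (x - 1) := by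
  simp [descPochhammer_succ_left, eval_comp]

noncomputable def descConv (x : R) (f : ℕ → R) (N : ℕ) : R :=
  ∑ i ∈ range N, (descPochhammer R i).eval (x + N) * f (N - i)

@[simp]
theorem descConv_zero (x : R) (f : ℕ → R) : descConv x f 0 = 0 :=
  sum_range_zero _

theorem descConv_succ (x : R) (f : ℕ → R) (N : ℕ) :
    descConv x f (N + 1) = f (N + 1) + (x + (N + 1)) * descConv x f N := by
  rw [descConv, descConv, sum_range_succ', mul_sum, add_comm (f (N + 1))]
  congr 1
  · refine sum_congr rfl fun i _ => ?_
    rw [descPochhammer_succ_eval_left, Nat.add_sub_add_right]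
    push_cast
    ring_nf
  · simp

end DescConv

section BooleCoeff

variable (lam : ℝ)

/-- `a_0(M;λ)` in closed form. -/
noncomputable def booleA0 : ℕ → ℝ
  | 0 => 1 / lam
  | M + 1 => (descPochhammer ℝ M).eval ((M : ℝ) + lam)

/-- `a_1(M;λ) = -λ · booleA1 λ M`. -/
noncomputable def booleA1 : ℕ → ℝ :=
  descConv (2 * lam - 1) fun k => booleA0 lam (k - 1)

/-- `a_2(M+1;λ) = 2λ² · booleA2 λ M`. -/
noncomputable def booleA2 : ℕ → ℝ :=
  descConv (3 * lam) (booleA1 lam)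

theorem booleA1_succ (M : ℕ) :
    booleA1 lam (M + 1) = booleA0 lam M + (2 * lam + M) * booleA1 lam M := by
  rw [booleA1, descConv_succ, Nat.add_sub_cancel]
  ring

theorem booleA2_succ (M : ℕ) :
    booleA2 lam (M + 1) = booleA1 lam (M + 1) + (3 * lam + (M + 1)) * booleA2 lam M :=
  descConv_succ _ _ M

theorem booleA1_one : booleA1 lam 1 = 1 / lam := by
  simp [booleA1, descConv, booleA0]

theorem booleA2_one : booleA2 lam 1 = 1 / lam := by
  simp [booleA2, descConv, booleA1_one]

theorem booleA2_eq_double_sum (N : ℕ) :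
    booleA2 lam N =
      ∑ i₂ ∈ range N, ∑ i₁ ∈ range (N - i₂),
        (descPochhammer ℝ i₂).eval ((N : ℝ) + 3 * lam) *
          (descPochhammer ℝ i₁).eval ((N : ℝ) + 2 * lam - (i₂ : ℝ) - 1) *
          (if i₂ + i₁ = N - 1 then 1 / lam
           else (descPochhammer ℝ (N - i₂ - i₁ - 2)).eval
                  ((N : ℝ) + lam - (i₂ : ℝ) - (i₁ : ℝ) - 2)) := by
  rw [booleA2, descConv]
  refine sum_congr rfl fun i₂ hi₂ => ?_
  rw [booleA1, descConv, mul_sum]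
  refine sum_congr rfl fun i₁ hi₁ => ?_
  obtain ⟨k, rfl⟩ : ∃ k, N = i₂ + i₁ + 1 + k :=
    ⟨N - (i₂ + i₁ + 1), by simp only [mem_range] at hi₂ hi₁; omega⟩
  have hN₂ : i₂ + i₁ + 1 + k - i₂ = i₁ + 1 + k := by omega
  have hN₁ : i₁ + 1 + k - i₁ - 1 = k := by omega
  rw [hN₂, hN₁]
  cases k with
  | zero =>
    rw [if_pos (by omega), booleA0]
    push_cast
    ring_nf
  | succ k =>
    rw [if_neg (by omega), show i₁ + 1 + (k + 1) - i₁ - 2 = k by omega, booleA0]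
    push_cast
    ring_nf

end BooleCoeff

section Recurrence

variable {lam : ℝ} {a : ℕ → ℕ → ℝ}

theorem a_zero_succ_eq_booleA0 (ha01 : a 0 1 = 1)
    (haTop : ∀ N : ℕ, 1 ≤ N → a 0 (N + 1) = ((N : ℝ) + lam) * a 0 N) (M : ℕ) :
    a 0 (M + 1) = booleA0 lam (M + 1) := by
  induction M with
  | zero => simpa [booleA0] using ha01
  | succ M ih =>
    rw [haTop (M + 1) (by omega), ih, booleA0, booleA0, descPochhammer_succ_eval_left]
    push_cast
    ring_nf

theorem a_one_succ_eq_booleA1 (hlam : lam ≠ 0) (ha11 : a 1 1 = -1)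
    (ha0 : ∀ M : ℕ, a 0 (M + 1) = booleA0 lam (M + 1))
    (haRow : ∀ N : ℕ, 1 ≤ N → a 1 (N + 1) = -lam * a 0 N + ((N : ℝ) + 2 * lam) * a 1 N)
    (M : ℕ) : a 1 (M + 1) = -lam * booleA1 lam (M + 1) := by
  induction M with
  | zero => rw [ha11, booleA1_one]; field_simp
  | succ M ih =>
    rw [haRow (M + 1) (by omega), ih, ha0, booleA1_succ lam (M + 1)]
    push_cast
    ring_nf

theorem a_two_succ_eq_booleA2 (ha22 : a 2 2 = 2 * lam ^ 2 * booleA2 lam 1)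
    (ha1 : ∀ M : ℕ, a 1 (M + 1) = -lam * booleA1 lam (M + 1))
    (haRow : ∀ N : ℕ, 2 ≤ N →
      a 2 (N + 1) = -(2 * lam) * a 1 N + ((N : ℝ) + 3 * lam) * a 2 N)
    (M : ℕ) (hM : 1 ≤ M) : a 2 (M + 1) = 2 * lam ^ 2 * booleA2 lam M := by
  induction M, hM using Nat.le_induction with
  | base => exact ha22
  | succ M hM ih =>
    rw [haRow (M + 1) (by omega), ih, ha1, booleA2_succ]
    push_cast
    ring_nf

end Recurrence

theorem boole_coeff_a2_closed_form_general (lam : ℝ) (hlam : lam ≠ 0)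
    (a : ℕ → ℕ → ℝ)
    (ha01 : a 0 1 = 1) (ha11 : a 1 1 = -1)
    (haTop : ∀ N : ℕ, 1 ≤ N → a 0 (N + 1) = ((N : ℝ) + lam) * a 0 N)
    (haBot : ∀ N : ℕ, 1 ≤ N →
      a (N + 1) (N + 1) = -(((N : ℝ) + 1) * lam) * a N N)
    (haMid : ∀ N : ℕ, 1 ≤ N → ∀ i : ℕ, 2 ≤ i → i ≤ N + 1 →
      a (i - 1) (N + 1) =
        -(((i : ℝ) - 1) * lam) * a (i - 2) N + ((N : ℝ) + (i : ℝ) * lam) * a (i - 1) N)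
    (N : ℕ) (hN : 2 ≤ N) :
    a 2 (N + 1) =
      (Nat.factorial 2 : ℝ) * lam ^ 2 *
        ∑ i₂ ∈ Finset.range N, ∑ i₁ ∈ Finset.range (N - i₂),
          (descPochhammer ℝ i₂).eval ((N : ℝ) + 3 * lam) *
            (descPochhammer ℝ i₁).eval ((N : ℝ) + 2 * lam - (i₂ : ℝ) - 1) *
            (if i₂ + i₁ = N - 1 then 1 / lam
             else (descPochhammer ℝ (N - i₂ - i₁ - 2)).eval
                    ((N : ℝ) + lam - (i₂ : ℝ) - (i₁ : ℝ) - 2)) := by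
  have haRow1 : ∀ M : ℕ, 1 ≤ M →
      a 1 (M + 1) = -lam * a 0 M + ((M : ℝ) + 2 * lam) * a 1 M := fun M hM => by
    have h := haMid M hM 2 le_rfl (by omega)
    norm_num at h
    linarith
  have haRow2 : ∀ M : ℕ, 2 ≤ M →
      a 2 (M + 1) = -(2 * lam) * a 1 M + ((M : ℝ) + 3 * lam) * a 2 M := fun M hM => by
    have h := haMid M (by omega) 3 (by omega) (by omega)
    norm_num at h
    linarith
  have ha22 : a 2 2 = 2 * lam ^ 2 * booleA2 lam 1 := by
    rw [haBot 1 le_rfl, ha11, booleA2_one]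
    field_simp
    ring
  have ha1 := a_one_succ_eq_booleA1 hlam ha11 (a_zero_succ_eq_booleA0 ha01 haTop) haRow1
  rw [a_two_succ_eq_booleA2 ha22 ha1 haRow2 N (by omega), booleA2_eq_double_sum]
  norm_num

/-- For `λ ≠ 0` and the recursively defined coefficients
`a_k(N;λ)`, for every `N ≥ 2` one has
`a_2(N+1;λ) = 2!·λ² · Σ_{i₂=0}^{N-1} Σ_{i₁=0}^{N-i₂-1}
  (N+3λ)_{i₂} · (N+2λ-i₂-1)_{i₁} · (N+λ-i₂-i₁-2)_{N-i₂-i₁-2}`,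
where `(x)_n` is the falling factorial (`descPochhammer`) and summands with
`N-i₂-i₁-2 = -1` (i.e. `i₂+i₁ = N-1`) have the last factor replaced by
`a_0(0;λ) = 1/λ`. -/
theorem boole_coeff_a2_closed_form (lam : ℝ) (hlam : lam ≠ 0)
    (a : ℕ → ℕ → ℝ)
    (ha00 : a 0 0 = 1 / lam) (ha01 : a 0 1 = 1) (ha11 : a 1 1 = -1)
    (haTop : ∀ N : ℕ, 1 ≤ N → a 0 (N + 1) = ((N : ℝ) + lam) * a 0 N)
    (haBot : ∀ N : ℕ, 1 ≤ N →
      a (N + 1) (N + 1) = -(((N : ℝ) + 1) * lam) * a N N)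
    (haMid : ∀ N : ℕ, 1 ≤ N → ∀ i : ℕ, 2 ≤ i → i ≤ N + 1 →
      a (i - 1) (N + 1) =
        -(((i : ℝ) - 1) * lam) * a (i - 2) N + ((N : ℝ) + (i : ℝ) * lam) * a (i - 1) N)
    (N : ℕ) (hN : 2 ≤ N) :
    a 2 (N + 1) =
      (Nat.factorial 2 : ℝ) * lam ^ 2 *
        ∑ i₂ ∈ Finset.range N, ∑ i₁ ∈ Finset.range (N - i₂),
          (descPochhammer ℝ i₂).eval ((N : ℝ) + 3 * lam) *
            (descPochhammer ℝ i₁).eval ((N : ℝ) + 2 * lam - (i₂ : ℝ) - 1) *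
            (if i₂ + i₁ = N - 1 then 1 / lam
             else (descPochhammer ℝ (N - i₂ - i₁ - 2)).eval
                    ((N : ℝ) + lam - (i₂ : ℝ) - (i₁ : ℝ) - 2)) :=
  boole_coeff_a2_closed_form_general lam hlam a ha01 ha11 haTop haBot haMid N hN
end

section
/- Let λ be a nonzero real number, let Bl_n(λ) be the Boole numbers, Bl_n^{(i)}(λ) the higher-order Boole numbers, and a_k(N;λ) the recursively defined coefficients. Then for every integer N ≥ 1 and every integer k ≥ 0 one has Bl_{k+N}(λ) = (−1)^N · λ · Σ_{i=1}^{N+1} a_{i−1}(N;λ) · Σ_{l=0}^{k} C(k,l) · (−1)^l · (N+l−1)_l · Bl_{k−l}^{(i)}(λ), where C(k,l) is the binomial coefficient and (N+l−1)_l = (N+l−1)(N+l−2)···N is the falling factorial of length l. -/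
/-!
Write `f t = 1 / ((1 + t) ^ λ + 1)`. Since `(1 + t) ^ λ * f = 1 - f`, one has
`f' = -λ (1 + t)⁻¹ (f - f²)`, so differentiating `(1 + t) ^ (-N) * P(f)` for a polynomial `P`
gives `-(1 + t) ^ (-(N + 1)) * (N P + λ y (1 - y) P')(f)`. With
`P_N(y) = Σ_j a_j(N) y^(j+1)`, the recurrence for `a` is exactly
`P_(N+1) = N P_N + λ y (1 - y) P_N'`, hence `f^(N)(t) = (-1)^N λ (1 + t)^(-N) P_N(f t)`.
Differentiating this `k` more times at `0` by Leibniz's rule, with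
`D^l (1 + t)^(-N) |₀ = (-1)^l (N + l - 1)_l`, gives the identity.
-/

open Finset Topology

noncomputable def booleGF (lam t : ℝ) : ℝ := 1 / ((1 + t) ^ lam + 1)

lemma contDiffAt_booleGF (lam : ℝ) {t : ℝ} (ht : -1 < t) {n : WithTop ℕ∞} :
    ContDiffAt ℝ n (booleGF lam) t := by
  have hpos : (0 : ℝ) < 1 + t := by linarith
  unfold booleGF
  simp only [one_div]
  exact (((contDiffAt_const.add contDiffAt_id).rpow_const_of_ne hpos.ne').add
    contDiffAt_const).inv (by positivity)

lemma contDiffAt_one_add_zpow_neg (N : ℕ) {t : ℝ} (ht : -1 < t) {n : WithTop ℕ∞} :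
    ContDiffAt ℝ n (fun s : ℝ => (1 + s) ^ (-(N : ℤ))) t := by
  have hpos : (0 : ℝ) < 1 + t := by linarith
  simp only [zpow_neg, zpow_natCast]
  exact ((contDiffAt_const.add contDiffAt_id).pow N).inv (by positivity)

lemma hasDerivAt_booleGF (lam : ℝ) {t : ℝ} (ht : -1 < t) :
    HasDerivAt (booleGF lam) (-lam * (1 + t)⁻¹ * (booleGF lam t - booleGF lam t ^ 2)) t := by
  have hpos : (0 : ℝ) < 1 + t := by linarith
  have hbase : HasDerivAt (fun s : ℝ => (1 + s) ^ lam + 1) (lam * (1 + t) ^ (lam - 1)) t := by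
    simpa using
      (((hasDerivAt_id t).const_add 1).rpow_const (p := lam) (Or.inl hpos.ne')).add_const 1
  have hinv := hbase.inv (by positivity)
  simp only [← one_div] at hinv
  refine hinv.congr_deriv ?_
  rw [Real.rpow_sub hpos, Real.rpow_one, booleGF]
  field_simp
  ring

lemma hasDerivAt_booleGF_pow (lam : ℝ) (i : ℕ) {t : ℝ} (ht : -1 < t) :
    HasDerivAt (fun s => booleGF lam s ^ i)
      (-(i * lam) * (1 + t)⁻¹ * (booleGF lam t ^ i - booleGF lam t ^ (i + 1))) t := by
  refine ((hasDerivAt_booleGF lam ht).pow i).congr_deriv ?_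
  rcases i with _ | i
  · simp
  · push_cast; ring

lemma hasDerivAt_one_add_zpow_neg_mul_booleGF_pow (lam : ℝ) (N i : ℕ) {t : ℝ} (ht : -1 < t) :
    HasDerivAt (fun s => (1 + s) ^ (-(N : ℤ)) * booleGF lam s ^ i)
      (-(1 + t) ^ (-((N + 1 : ℕ) : ℤ)) *
        ((N + i * lam) * booleGF lam t ^ i - i * lam * booleGF lam t ^ (i + 1))) t := by
  have hne : (1 : ℝ) + t ≠ 0 := by linarith
  have hzpow : HasDerivAt (fun s : ℝ => (1 + s) ^ (-(N : ℤ)))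
      (-(N : ℝ) * (1 + t) ^ (-(N : ℤ) - 1)) t := by
    have := (hasDerivAt_zpow (-(N : ℤ)) (1 + t) (Or.inl hne)).comp t
      ((hasDerivAt_id t).const_add 1)
    simpa [Function.comp_def] using this
  refine (hzpow.mul (hasDerivAt_booleGF_pow lam i ht)).congr_deriv ?_
  have hsplit : (1 + t) ^ (-((N + 1 : ℕ) : ℤ)) = (1 + t) ^ (-(N : ℤ)) * (1 + t)⁻¹ := by
    rw [← zpow_neg_one, ← zpow_add₀ hne]; push_cast; ring_nf
  rw [show -(N : ℤ) - 1 = -((N + 1 : ℕ) : ℤ) by push_cast; ring, hsplit]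
  ring

lemma iteratedDeriv_one_add_zpow_neg_zero (N l : ℕ) :
    iteratedDeriv l (fun t : ℝ => (1 + t) ^ (-(N : ℤ))) 0 =
      (-1) ^ l * (descPochhammer ℝ l).eval ((N : ℝ) + l - 1) := by
  rw [congrFun (iteratedDeriv_comp_const_add l (fun x : ℝ => x ^ (-(N : ℤ))) 1) 0, add_zero,
    iteratedDeriv_eq_iterate, iter_deriv_zpow, one_zpow, mul_one,
    ← ascPochhammer_eval_neg_eq_descPochhammer, ← descPochhammer_eval_eq_prod_range,
    descPochhammer_eval_eq_ascPochhammer]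
  push_cast
  ring_nf

lemma sum_range_mul_of_three_term_recurrence (lam : ℝ) (N : ℕ) (a c p : ℕ → ℝ)
    (h0 : c 0 = (N + lam) * a 0)
    (hmid : ∀ j, 1 ≤ j → j ≤ N → c j = -(j * lam) * a (j - 1) + (N + (j + 1) * lam) * a j)
    (htop : c (N + 1) = -((N + 1) * lam) * a N) :
    ∑ j ∈ range (N + 2), c j * p j =
      ∑ j ∈ range (N + 1), a j * ((N + (j + 1) * lam) * p j - (j + 1) * lam * p (j + 1)) := by
  have hmid_shift : ∀ j ∈ range N, c (j + 1) * p (j + 1) =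
      a (j + 1) * ((N + ((j + 1 : ℕ) + 1) * lam) * p (j + 1)) -
        a j * ((j + 1) * lam * p (j + 1)) := by
    intro j hj
    rw [hmid (j + 1) (by omega) (by simp at hj; omega)]
    push_cast
    ring
  simp only [mul_sub, sum_sub_distrib]
  rw [sum_range_succ, sum_range_succ', sum_congr rfl hmid_shift, sum_sub_distrib, h0, htop,
    sum_range_succ', sum_range_succ _ N]
  push_cast
  ring

lemma iteratedDeriv_booleGF (lam : ℝ) (a : ℕ → ℕ → ℝ) (h_init : lam * a 0 0 = 1)
    (h_zero : ∀ N : ℕ, a 0 (N + 1) = (N + lam) * a 0 N)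
    (h_mid : ∀ N j : ℕ, 1 ≤ j → j ≤ N →
      a j (N + 1) = -(j * lam) * a (j - 1) N + (N + (j + 1) * lam) * a j N)
    (h_diag : ∀ N : ℕ, a (N + 1) (N + 1) = -((N + 1) * lam) * a N N)
    (N : ℕ) {t : ℝ} (ht : -1 < t) :
    iteratedDeriv N (booleGF lam) t =
      (-1) ^ N * lam *
        ∑ j ∈ range (N + 1), a j N * ((1 + t) ^ (-(N : ℤ)) * booleGF lam t ^ (j + 1)) := by
  induction N generalizing t with
  | zero => simp [← mul_assoc, h_init]
  | succ N ih =>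
    have hderiv : HasDerivAt (fun s => (-1) ^ N * lam *
        ∑ j ∈ range (N + 1), a j N * ((1 + s) ^ (-(N : ℤ)) * booleGF lam s ^ (j + 1)))
        ((-1) ^ N * lam * ∑ j ∈ range (N + 1), a j N * (-(1 + t) ^ (-((N + 1 : ℕ) : ℤ)) *
          ((N + (j + 1 : ℕ) * lam) * booleGF lam t ^ (j + 1) -
            (j + 1 : ℕ) * lam * booleGF lam t ^ (j + 1 + 1)))) t :=
      (HasDerivAt.fun_sum fun j _ =>
        (hasDerivAt_one_add_zpow_neg_mul_booleGF_pow lam N (j + 1) ht).const_mul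
          (a j N)).const_mul _
    have hlocal : iteratedDeriv N (booleGF lam) =ᶠ[𝓝 t] fun s => (-1) ^ N * lam *
        ∑ j ∈ range (N + 1), a j N * ((1 + s) ^ (-(N : ℤ)) * booleGF lam s ^ (j + 1)) := by
      filter_upwards [Ioi_mem_nhds ht] with s hs using ih hs
    rw [iteratedDeriv_succ, hlocal.deriv_eq, hderiv.deriv,
      sum_range_mul_of_three_term_recurrence lam N (a · N) (a · (N + 1)) _
        (h_zero N) (h_mid N) (h_diag N),
      pow_succ, mul_neg_one, neg_mul, neg_mul, ← mul_neg, ← sum_neg_distrib]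
    congr 1
    refine sum_congr rfl fun j _ => ?_
    push_cast
    ring

lemma iteratedDeriv_one_add_zpow_neg_mul_booleGF_pow_zero (lam : ℝ) (N i k : ℕ) :
    iteratedDeriv k (fun t => (1 + t) ^ (-(N : ℤ)) * booleGF lam t ^ i) 0 =
      ∑ l ∈ range (k + 1), (k.choose l : ℝ) * (-1) ^ l *
        (descPochhammer ℝ l).eval ((N : ℝ) + l - 1) *
          iteratedDeriv (k - l) (fun t => booleGF lam t ^ i) 0 := by
  rw [iteratedDeriv_fun_mul (contDiffAt_one_add_zpow_neg N (by norm_num))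
    ((contDiffAt_booleGF lam (by norm_num)).pow i)]
  refine sum_congr rfl fun l _ => ?_
  rw [iteratedDeriv_one_add_zpow_neg_zero, ← mul_assoc]

lemma iteratedDeriv_add_booleGF_zero (lam : ℝ) (a : ℕ → ℕ → ℝ)
    (h_init : lam * a 0 0 = 1)
    (h_zero : ∀ N : ℕ, a 0 (N + 1) = (N + lam) * a 0 N)
    (h_mid : ∀ N j : ℕ, 1 ≤ j → j ≤ N →
      a j (N + 1) = -(j * lam) * a (j - 1) N + (N + (j + 1) * lam) * a j N)
    (h_diag : ∀ N : ℕ, a (N + 1) (N + 1) = -((N + 1) * lam) * a N N) (N k : ℕ) :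
    iteratedDeriv (k + N) (booleGF lam) 0 =
      (-1) ^ N * lam * ∑ j ∈ range (N + 1), a j N *
        ∑ l ∈ range (k + 1), (k.choose l : ℝ) * (-1) ^ l *
          (descPochhammer ℝ l).eval ((N : ℝ) + l - 1) *
            iteratedDeriv (k - l) (fun t => booleGF lam t ^ (j + 1)) 0 := by
  have h_formula : iteratedDeriv N (booleGF lam) =ᶠ[𝓝 0] fun t => (-1) ^ N * lam *
      ∑ j ∈ range (N + 1), a j N * ((1 + t) ^ (-(N : ℤ)) * booleGF lam t ^ (j + 1)) := by
    filter_upwards [Ioi_mem_nhds (show (-1 : ℝ) < 0 by norm_num)] with t ht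
      using iteratedDeriv_booleGF lam a h_init h_zero h_mid h_diag N ht
  rw [iteratedDeriv_eq_iterate, Function.iterate_add_apply, ← iteratedDeriv_eq_iterate,
    ← iteratedDeriv_eq_iterate, h_formula.iteratedDeriv_eq, iteratedDeriv_const_mul_field,
    iteratedDeriv_fun_sum fun j _ => contDiffAt_const.mul
      ((contDiffAt_one_add_zpow_neg N (by norm_num)).mul
        ((contDiffAt_booleGF lam (by norm_num)).pow _))]
  simp only [iteratedDeriv_const_mul_field, iteratedDeriv_one_add_zpow_neg_mul_booleGF_pow_zero]

theorem boole_number_identity_general (lam : ℝ) (hlam : lam ≠ 0)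
    (Bl : ℕ → ℝ)
    (hBl : ∀ n : ℕ, iteratedDeriv n (fun t : ℝ => 1 / ((1 + t) ^ lam + 1)) 0 = Bl n)
    (Blr : ℕ → ℕ → ℝ)
    (hBlr : ∀ r : ℕ, 1 ≤ r → ∀ n : ℕ,
      iteratedDeriv n (fun t : ℝ => (1 / ((1 + t) ^ lam + 1)) ^ r) 0 = Blr r n)
    (a : ℕ → ℕ → ℝ)
    (ha00 : a 0 0 = 1 / lam) (ha01 : a 0 1 = 1) (ha11 : a 1 1 = -1)
    (haTop : ∀ N : ℕ, 1 ≤ N → a 0 (N + 1) = ((N : ℝ) + lam) * a 0 N)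
    (haBot : ∀ N : ℕ, 1 ≤ N →
      a (N + 1) (N + 1) = -(((N : ℝ) + 1) * lam) * a N N)
    (haMid : ∀ N : ℕ, 1 ≤ N → ∀ i : ℕ, 2 ≤ i → i ≤ N + 1 →
      a (i - 1) (N + 1) =
        -(((i : ℝ) - 1) * lam) * a (i - 2) N + ((N : ℝ) + (i : ℝ) * lam) * a (i - 1) N)
    (N : ℕ) (k : ℕ) :
    Bl (k + N) =
      (-1 : ℝ) ^ N * lam *
        ∑ i ∈ Finset.Icc 1 (N + 1), a (i - 1) N *
          ∑ l ∈ Finset.range (k + 1),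
            (k.choose l : ℝ) * (-1 : ℝ) ^ l *
              (descPochhammer ℝ l).eval ((N : ℝ) + (l : ℝ) - 1) * Blr i (k - l) := by
  have h_init : lam * a 0 0 = 1 := by rw [ha00, mul_one_div_cancel hlam]
  have h_zero : ∀ N : ℕ, a 0 (N + 1) = (N + lam) * a 0 N := by
    rintro (_ | N)
    · rw [ha01, ha00]; field_simp; simp
    · exact haTop _ (by omega)
  have h_diag : ∀ N : ℕ, a (N + 1) (N + 1) = -((N + 1) * lam) * a N N := by
    rintro (_ | N)
    · rw [ha11, ha00]; field_simp; simp
    · exact haBot _ (by omega)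
  have h_mid : ∀ N j : ℕ, 1 ≤ j → j ≤ N →
      a j (N + 1) = -(j * lam) * a (j - 1) N + (N + (j + 1) * lam) * a j N := by
    intro N j hj hjN
    have h := haMid N (by omega) (j + 1) (by omega) (by omega)
    rw [Nat.add_sub_cancel, show j + 1 - 2 = j - 1 by omega] at h
    rw [h]
    push_cast
    ring
  rw [← hBl, ← Ico_add_one_right_eq_Icc, sum_Ico_eq_sum_range, Nat.add_sub_cancel]
  refine (iteratedDeriv_add_booleGF_zero lam a h_init h_zero h_mid h_diag N k).trans
    (congrArg _ (sum_congr rfl fun j _ => ?_))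
  simp only [add_comm 1 j, Nat.add_sub_cancel, ← hBlr (j + 1) (by omega)]
  rfl

/-- (Theorem 3 of the paper.)  Let `λ ≠ 0`.  The Boole numbers
`Bl n` are defined by the EGF identity `1/((1+t)^λ+1) = Σ Bl n · tⁿ/n!`
(equivalently, `Bl n` is the `n`-th derivative at `0` of `t ↦ 1/((1+t)^λ+1)`,
with `(1+t)^λ = exp(λ log(1+t))` the real power), and the higher-order Boole
numbers `Blr r n` by `(1/((1+t)^λ+1))^r = Σ Blr r n · tⁿ/n!` for `r ≥ 1`.
With the recursively defined coefficients `a_k(N;λ)`, for all `N ≥ 1` and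
`k ≥ 0`:
`Bl (k+N) = (-1)^N λ Σ_{i=1}^{N+1} a_{i-1}(N;λ)
  Σ_{l=0}^{k} C(k,l) (-1)^l (N+l-1)_l · Blr i (k-l)`,
where `(N+l-1)_l` is the falling factorial (`descPochhammer`). -/
theorem boole_number_identity (lam : ℝ) (hlam : lam ≠ 0)
    (Bl : ℕ → ℝ)
    (hBl : ∀ n : ℕ, iteratedDeriv n (fun t : ℝ => 1 / ((1 + t) ^ lam + 1)) 0 = Bl n)
    (Blr : ℕ → ℕ → ℝ)
    (hBlr : ∀ r : ℕ, 1 ≤ r → ∀ n : ℕ,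
      iteratedDeriv n (fun t : ℝ => (1 / ((1 + t) ^ lam + 1)) ^ r) 0 = Blr r n)
    (a : ℕ → ℕ → ℝ)
    (ha00 : a 0 0 = 1 / lam) (ha01 : a 0 1 = 1) (ha11 : a 1 1 = -1)
    (haTop : ∀ N : ℕ, 1 ≤ N → a 0 (N + 1) = ((N : ℝ) + lam) * a 0 N)
    (haBot : ∀ N : ℕ, 1 ≤ N →
      a (N + 1) (N + 1) = -(((N : ℝ) + 1) * lam) * a N N)
    (haMid : ∀ N : ℕ, 1 ≤ N → ∀ i : ℕ, 2 ≤ i → i ≤ N + 1 →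
      a (i - 1) (N + 1) =
        -(((i : ℝ) - 1) * lam) * a (i - 2) N + ((N : ℝ) + (i : ℝ) * lam) * a (i - 1) N)
    (N : ℕ) (hN : 1 ≤ N) (k : ℕ) :
    Bl (k + N) =
      (-1 : ℝ) ^ N * lam *
        ∑ i ∈ Finset.Icc 1 (N + 1), a (i - 1) N *
          ∑ l ∈ Finset.range (k + 1),
            (k.choose l : ℝ) * (-1 : ℝ) ^ l *
              (descPochhammer ℝ l).eval ((N : ℝ) + (l : ℝ) - 1) * Blr i (k - l) :=
  boole_number_identity_general lam hlam Bl hBl Blr hBlr a ha00 ha01 ha11 haTop haBot haMid N k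
end

section
/- Let λ be a nonzero real number, let Bl_k(λ) be the Boole numbers, E_n the Euler numbers, and S₂(n,k) the Stirling numbers of the second kind. Then for every integer n ≥ 0 one has (1/2)·λ^n·E_n = Σ_{k=0}^{n} Bl_k(λ)·S₂(n,k). -/
/-!
Substituting `t = eᵘ - 1` turns the Boole generating function `f t = 1 / ((1 + t) ^ λ + 1)` into
`1 / (e^{λu} + 1)`, half the Euler generating function at `λu`, whose `n`-th derivative at `0` is
`λⁿ Eₙ / 2`. On the other hand, the `n`-th derivative of `u ↦ f (eᵘ - 1)` is
`∑ₖ S(n, k) e^{ku} f⁽ᵏ⁾(eᵘ - 1)`: differentiating once more sends the coefficients through the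
recursion `S(n+1, k+1) = (k+1) S(n, k+1) + S(n, k)`. At `u = 0` this is `∑ₖ S(n, k) Blₖ`, and the
same formula for `f t = tᵏ / k!` identifies the derivatives of `(eᵘ - 1)ᵏ / k!` with `S(n, k)`.
-/

open Finset Real Nat
open scoped ContDiff Topology

theorem sum_stirlingSecond_succ_mul {R : Type*} [CommSemiring R] (g : ℕ → R) (n : ℕ) :
    ∑ k ∈ range (n + 2), (stirlingSecond (n + 1) k : R) * g k =
      ∑ k ∈ range (n + 1), (stirlingSecond n k : R) * (k * g k + g (k + 1)) := by
  have hshift : ∑ k ∈ range (n + 1), (stirlingSecond n k : R) * (k * g k) =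
      ∑ k ∈ range (n + 1), (k + 1) * (stirlingSecond n (k + 1) : R) * g (k + 1) := by
    rw [sum_range_succ', sum_range_succ, stirlingSecond_eq_zero_of_lt n.lt_succ_self]
    simp only [cast_zero, cast_add, cast_one, zero_mul, mul_zero, add_zero]
    exact sum_congr rfl fun k _ => by ring
  simp_rw [mul_add]
  rw [sum_range_succ' _ (n + 1), stirlingSecond_succ_zero, sum_add_distrib, hshift,
    ← sum_add_distrib]
  simp only [stirlingSecond_succ_succ, cast_add, cast_mul, cast_succ, cast_zero, zero_mul, add_zero]
  exact sum_congr rfl fun k _ => by ring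

theorem ContDiffOn.hasDerivAt_iteratedDeriv {𝕜 F : Type*} [NontriviallyNormedField 𝕜]
    [NormedAddCommGroup F] [NormedSpace 𝕜 F] {f : 𝕜 → F} {U : Set 𝕜} {x : 𝕜}
    (hf : ContDiffOn 𝕜 ∞ f U) (hU : IsOpen U) (hx : x ∈ U) (k : ℕ) :
    HasDerivAt (iteratedDeriv k f) (iteratedDeriv (k + 1) f x) x := by
  have hd : DifferentiableAt 𝕜 (iteratedDerivWithin k f U) x :=
    (hf.differentiableOn_iteratedDerivWithin (by exact_mod_cast ENat.natCast_lt_top k)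
      hU.uniqueDiffOn x hx).differentiableAt (hU.mem_nhds hx)
  have heq : iteratedDerivWithin k f U =ᶠ[𝓝 x] iteratedDeriv k f :=
    Filter.eventually_of_mem (hU.mem_nhds hx) (iteratedDerivWithin_of_isOpen hU)
  rw [iteratedDeriv_succ]
  exact (hd.congr_of_eventuallyEq heq.symm).hasDerivAt

section

variable {f : ℝ → ℝ}

theorem hasDerivAt_exp_mul_iteratedDeriv_comp_exp_sub_one (hf : ContDiffOn ℝ ∞ f (Set.Ioi (-1)))
    (k : ℕ) (t : ℝ) :
    HasDerivAt (fun t => exp (k * t) * iteratedDeriv k f (exp t - 1))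
      (k * (exp (k * t) * iteratedDeriv k f (exp t - 1)) +
        exp ((k + 1 : ℕ) * t) * iteratedDeriv (k + 1) f (exp t - 1)) t := by
  have hx : exp t - 1 ∈ Set.Ioi (-1) := by simpa using exp_pos t
  have hinner := (hf.hasDerivAt_iteratedDeriv isOpen_Ioi hx k).comp t
    ((hasDerivAt_exp t).sub_const 1)
  refine ((((hasDerivAt_id' t).const_mul (k : ℝ)).exp).fun_mul hinner).congr_deriv ?_
  rw [Function.comp_apply, cast_succ, add_mul, one_mul, exp_add]
  ring

theorem iteratedDeriv_comp_exp_sub_one (hf : ContDiffOn ℝ ∞ f (Set.Ioi (-1))) (n : ℕ) (t : ℝ) :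
    iteratedDeriv n (fun t => f (exp t - 1)) t =
      ∑ k ∈ range (n + 1),
        (stirlingSecond n k : ℝ) * (exp (k * t) * iteratedDeriv k f (exp t - 1)) := by
  induction n generalizing t with
  | zero => simp
  | succ n ih =>
    rw [iteratedDeriv_succ, funext ih, sum_stirlingSecond_succ_mul]
    exact (HasDerivAt.fun_sum fun k _ =>
      (hasDerivAt_exp_mul_iteratedDeriv_comp_exp_sub_one hf k t).const_mul _).deriv

theorem iteratedDeriv_comp_exp_sub_one_zero (hf : ContDiffOn ℝ ∞ f (Set.Ioi (-1))) (n : ℕ) :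
    iteratedDeriv n (fun t => f (exp t - 1)) 0 =
      ∑ k ∈ range (n + 1), (stirlingSecond n k : ℝ) * iteratedDeriv k f 0 := by
  simp [iteratedDeriv_comp_exp_sub_one hf]

end

theorem iteratedDeriv_exp_sub_one_pow_div_factorial_zero (n k : ℕ) :
    iteratedDeriv n (fun t => (exp t - 1) ^ k / (k ! : ℝ)) 0 = stirlingSecond n k := by
  have hpow : ContDiffOn ℝ ∞ (fun x : ℝ => x ^ k / (k ! : ℝ)) (Set.Ioi (-1)) := by fun_prop
  rw [iteratedDeriv_comp_exp_sub_one_zero hpow]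
  have hdelta : ∀ j,
      iteratedDeriv j (fun x : ℝ => x ^ k / (k ! : ℝ)) 0 = if k = j then 1 else 0 := by
    intro j
    rw [iteratedDeriv_div_const, iteratedDeriv_fun_pow_zero]
    rcases eq_or_ne k j with rfl | hkj
    · simp [(factorial_pos k).ne']
    · simp [hkj, hkj.symm]
  simp only [hdelta, mul_ite, mul_one, mul_zero, sum_ite_eq, mem_range]
  split_ifs with hk
  · rfl
  · rw [stirlingSecond_eq_zero_of_lt (by omega), cast_zero]

theorem contDiffOn_one_div_one_add_rpow_add_one (lam : ℝ) :
    ContDiffOn ℝ ∞ (fun t : ℝ => 1 / ((1 + t) ^ lam + 1)) (Set.Ioi (-1)) := by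
  intro t ht
  have hbase : 0 < 1 + t := by simp only [Set.mem_Ioi] at ht; linarith
  refine ContDiffAt.contDiffWithinAt (contDiffAt_const.div ?_ ?_)
  · exact ((contDiffAt_const.add contDiffAt_id).rpow_const_of_ne hbase.ne').add contDiffAt_const
  · exact (add_pos (rpow_pos_of_pos hbase lam) one_pos).ne'

theorem one_div_one_add_exp_sub_one_rpow_add_one (lam t : ℝ) :
    1 / ((1 + (exp t - 1)) ^ lam + 1) = 1 / 2 * (2 / (exp (lam * t) + 1)) := by
  rw [add_sub_cancel, ← exp_mul, mul_comm t]
  ring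

theorem boole_euler_stirling2_general (lam : ℝ)
    (Bl : ℕ → ℝ)
    (hBl : ∀ n : ℕ, iteratedDeriv n (fun t : ℝ => 1 / ((1 + t) ^ lam + 1)) 0 = Bl n)
    (E : ℕ → ℝ)
    (hE : ∀ n : ℕ, iteratedDeriv n (fun t : ℝ => 2 / (Real.exp t + 1)) 0 = E n)
    (S2 : ℕ → ℕ → ℝ)
    (hS2 : ∀ n k : ℕ,
      iteratedDeriv n (fun t : ℝ => (Real.exp t - 1) ^ k / (k.factorial : ℝ)) 0 = S2 n k)
    (n : ℕ) :
    (1 / 2 : ℝ) * lam ^ n * E n = ∑ k ∈ Finset.range (n + 1), Bl k * S2 n k := by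
  have hEuler : ContDiff ℝ n (fun t : ℝ => 2 / (exp t + 1)) :=
    contDiff_const.div (contDiff_exp.add contDiff_const) fun t => (add_pos (exp_pos t) one_pos).ne'
  calc (1 / 2 : ℝ) * lam ^ n * E n
      = iteratedDeriv n (fun t => 1 / ((1 + (exp t - 1)) ^ lam + 1)) 0 := by
        simp only [one_div_one_add_exp_sub_one_rpow_add_one, iteratedDeriv_const_mul_field,
          iteratedDeriv_comp_const_mul hEuler, mul_zero, hE]
        ring
    _ = ∑ k ∈ range (n + 1), (stirlingSecond n k : ℝ) * Bl k := by
        simp only [hBl,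
          iteratedDeriv_comp_exp_sub_one_zero (contDiffOn_one_div_one_add_rpow_add_one lam)]
    _ = ∑ k ∈ range (n + 1), Bl k * S2 n k := sum_congr rfl fun k _ => by
        rw [← hS2, iteratedDeriv_exp_sub_one_pow_div_factorial_zero, mul_comm]

/-- Let `λ ≠ 0`.  The Boole numbers `Bl n` are defined by the
EGF identity `1/((1+t)^λ+1) = Σ Bl n · tⁿ/n!` (so `Bl n` is the `n`-th
derivative at `0` of `t ↦ 1/((1+t)^λ+1)`, real power), the Euler numbers `E n`
by `2/(eᵗ+1) = Σ E n · tⁿ/n!`, and the Stirling numbers of the second kind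
`S2 n k` by `(eᵗ-1)ᵏ/k! = Σ S2 n k · tⁿ/n!`.  Then for every `n ≥ 0`:
`(1/2)·λⁿ·E n = Σ_{k=0}^{n} Bl k · S2 n k`. -/
theorem boole_euler_stirling2 (lam : ℝ) (hlam : lam ≠ 0)
    (Bl : ℕ → ℝ)
    (hBl : ∀ n : ℕ, iteratedDeriv n (fun t : ℝ => 1 / ((1 + t) ^ lam + 1)) 0 = Bl n)
    (E : ℕ → ℝ)
    (hE : ∀ n : ℕ, iteratedDeriv n (fun t : ℝ => 2 / (Real.exp t + 1)) 0 = E n)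
    (S2 : ℕ → ℕ → ℝ)
    (hS2 : ∀ n k : ℕ,
      iteratedDeriv n (fun t : ℝ => (Real.exp t - 1) ^ k / (k.factorial : ℝ)) 0 = S2 n k)
    (n : ℕ) :
    (1 / 2 : ℝ) * lam ^ n * E n = ∑ k ∈ Finset.range (n + 1), Bl k * S2 n k :=
  boole_euler_stirling2_general lam Bl hBl E hE S2 hS2 n
end

section
/- Let λ be a nonzero real number, let Bl_k^{(i)}(λ) be the higher-order Boole numbers, E_n^{(i)} the higher-order Euler numbers, and S₂(n,k) the Stirling numbers of the second kind. Then for every integer i ≥ 1 and every integer n ≥ 0 one has 2^{−i}·λ^n·E_n^{(i)} = Σ_{k=0}^{n} Bl_k^{(i)}(λ)·S₂(n,k). -/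
/-!
Substituting `u = eᵗ - 1` turns `(1 + u) ^ λ` into `e^{λt}`, so the Boole generating function
becomes `2⁻ⁱ (2 / (e^{λt} + 1))ⁱ`, whose `n`-th derivative at `0` is `2⁻ⁱ λⁿ E_n^{(i)}`.
On the other hand, by Faà di Bruno's formula the `n`-th derivative at `0` of `g (eᵗ - 1)` only
involves `g⁽ᵏ⁾ (0)` for `k ≤ n`, because `eᵗ - 1` vanishes at `0`. So `g` may be replaced by its
Taylor polynomial `∑_{k ≤ n} Bl_k^{(i)} uᵏ / k!`, and each `(eᵗ - 1)ᵏ / k!` contributes `S₂(n, k)`.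
-/

open Finset

section

variable {𝕜 : Type*} [NontriviallyNormedField 𝕜]

theorem iteratedDeriv_comp_eq_of_iteratedDeriv_eq {g₁ g₂ f : 𝕜 → 𝕜} {x : 𝕜} {n : ℕ}
    (hg₁ : ContDiffAt 𝕜 n g₁ (f x)) (hg₂ : ContDiffAt 𝕜 n g₂ (f x)) (hf : ContDiffAt 𝕜 n f x)
    (h : ∀ k ≤ n, iteratedDeriv k g₁ (f x) = iteratedDeriv k g₂ (f x)) :
    iteratedDeriv n (g₁ ∘ f) x = iteratedDeriv n (g₂ ∘ f) x := by
  rw [iteratedDeriv_comp_eq_sum_orderedFinpartition hg₁ hf le_rfl,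
    iteratedDeriv_comp_eq_sum_orderedFinpartition hg₂ hf le_rfl]
  exact sum_congr rfl fun c _ => by rw [h c.length c.length_le]

variable [CharZero 𝕜]

theorem iteratedDeriv_sum_mul_pow_div_factorial_zero (c : ℕ → 𝕜) {n k : ℕ} (hk : k ≤ n) :
    iteratedDeriv k (fun u => ∑ j ∈ range (n + 1), c j * (u ^ j / j.factorial)) 0 = c k := by
  rw [iteratedDeriv_fun_sum fun j _ => by fun_prop]
  simp only [iteratedDeriv_const_mul_field, iteratedDeriv_div_const, iteratedDeriv_fun_pow_zero,
    eq_comm (a := k), Nat.cast_ite, Nat.cast_zero, ite_div, zero_div, mul_ite, mul_zero,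
    sum_ite_eq', mem_range]
  rw [if_pos (Nat.lt_succ_of_le hk), div_self (Nat.cast_ne_zero.mpr k.factorial_ne_zero), mul_one]

theorem iteratedDeriv_comp_eq_sum_of_apply_eq_zero {g f : 𝕜 → 𝕜} {x : 𝕜} {n : ℕ}
    (hg : ContDiffAt 𝕜 n g 0) (hf : ContDiffAt 𝕜 n f x) (hfx : f x = 0) :
    iteratedDeriv n (g ∘ f) x =
      ∑ k ∈ range (n + 1),
        iteratedDeriv k g 0 * iteratedDeriv n (fun t => f t ^ k / k.factorial) x := by
  set P : 𝕜 → 𝕜 := fun u => ∑ k ∈ range (n + 1), iteratedDeriv k g 0 * (u ^ k / k.factorial)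
  have hP : ContDiff 𝕜 n P := by fun_prop
  calc iteratedDeriv n (g ∘ f) x = iteratedDeriv n (P ∘ f) x :=
        iteratedDeriv_comp_eq_of_iteratedDeriv_eq (hfx ▸ hg) hP.contDiffAt hf fun k hk => by
          rw [hfx, iteratedDeriv_sum_mul_pow_div_factorial_zero _ hk]
    _ = _ := by
      rw [Function.comp_def, iteratedDeriv_fun_sum fun k _ => by fun_prop]
      simp only [iteratedDeriv_const_mul_field]

end

theorem boole_gf_comp_exp_sub_one (lam : ℝ) (r : ℕ) (t : ℝ) :
    (1 / ((1 + (Real.exp t - 1)) ^ lam + 1)) ^ r =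
      (2 : ℝ) ^ (-(r : ℤ)) * (2 / (Real.exp (lam * t) + 1)) ^ r := by
  rw [add_sub_cancel, Real.rpow_def_of_pos (Real.exp_pos t), Real.log_exp, mul_comm t lam,
    zpow_neg, zpow_natCast, eq_inv_mul_iff_mul_eq₀ (by positivity), ← mul_pow, mul_one_div]

theorem contDiffAt_boole_gf (lam : ℝ) (r n : ℕ) :
    ContDiffAt ℝ n (fun u : ℝ => (1 / ((1 + u) ^ lam + 1)) ^ r) 0 := by
  have hrpow : ContDiffAt ℝ n (fun u : ℝ => (1 + u) ^ lam) 0 :=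
    (Real.contDiffAt_rpow_const_of_ne (by norm_num : (1 + 0 : ℝ) ≠ 0)).comp 0
      (contDiffAt_const.add contDiffAt_id)
  exact (contDiffAt_const.div (hrpow.add contDiffAt_const) (by positivity)).pow r

theorem higher_boole_euler_stirling2_general (lam : ℝ)
    (Blr : ℕ → ℕ → ℝ)
    (hBlr : ∀ r : ℕ, 1 ≤ r → ∀ n : ℕ,
      iteratedDeriv n (fun t : ℝ => (1 / ((1 + t) ^ lam + 1)) ^ r) 0 = Blr r n)
    (Er : ℕ → ℕ → ℝ)
    (hEr : ∀ i : ℕ, 1 ≤ i → ∀ n : ℕ,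
      iteratedDeriv n (fun t : ℝ => (2 / (Real.exp t + 1)) ^ i) 0 = Er i n)
    (S2 : ℕ → ℕ → ℝ)
    (hS2 : ∀ n k : ℕ,
      iteratedDeriv n (fun t : ℝ => (Real.exp t - 1) ^ k / (k.factorial : ℝ)) 0 = S2 n k)
    (i : ℕ) (hi : 1 ≤ i) (n : ℕ) :
    (2 : ℝ) ^ (-(i : ℤ)) * lam ^ n * Er i n =
      ∑ k ∈ Finset.range (n + 1), Blr i k * S2 n k := by
  have hEuler : ContDiff ℝ n fun t : ℝ => (2 / (Real.exp t + 1)) ^ i :=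
    (contDiff_const.div (by fun_prop) fun t => by positivity).pow i
  calc (2 : ℝ) ^ (-(i : ℤ)) * lam ^ n * Er i n
      = iteratedDeriv n (fun t => (2 : ℝ) ^ (-(i : ℤ)) * (2 / (Real.exp (lam * t) + 1)) ^ i) 0 := by
        simp only [iteratedDeriv_const_mul_field, iteratedDeriv_comp_const_mul hEuler, mul_zero,
          hEr i hi, mul_assoc]
    _ = iteratedDeriv n ((fun u => (1 / ((1 + u) ^ lam + 1)) ^ i) ∘ fun t => Real.exp t - 1) 0 := by
        simp only [Function.comp_def, boole_gf_comp_exp_sub_one]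
    _ = ∑ k ∈ Finset.range (n + 1), Blr i k * S2 n k := by
        rw [iteratedDeriv_comp_eq_sum_of_apply_eq_zero (contDiffAt_boole_gf lam i n) (by fun_prop)
          (by simp)]
        simp only [hBlr i hi, hS2]

/-- Let `λ ≠ 0`.  For `r ≥ 1` the higher-order Boole numbers
`Blr r n` are defined by `(1/((1+t)^λ+1))^r = Σ Blr r n · tⁿ/n!` (real power
`(1+t)^λ = exp(λ log(1+t))`), the higher-order Euler numbers `Er i n` by
`(2/(eᵗ+1))ⁱ = Σ Er i n · tⁿ/n!`, and the Stirling numbers of the second kind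
`S2 n k` by `(eᵗ-1)ᵏ/k! = Σ S2 n k · tⁿ/n!`.  Then for all `i ≥ 1` and
`n ≥ 0`: `2⁻ⁱ·λⁿ·Er i n = Σ_{k=0}^{n} Blr i k · S2 n k`. -/
theorem higher_boole_euler_stirling2 (lam : ℝ) (hlam : lam ≠ 0)
    (Blr : ℕ → ℕ → ℝ)
    (hBlr : ∀ r : ℕ, 1 ≤ r → ∀ n : ℕ,
      iteratedDeriv n (fun t : ℝ => (1 / ((1 + t) ^ lam + 1)) ^ r) 0 = Blr r n)
    (Er : ℕ → ℕ → ℝ)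
    (hEr : ∀ i : ℕ, 1 ≤ i → ∀ n : ℕ,
      iteratedDeriv n (fun t : ℝ => (2 / (Real.exp t + 1)) ^ i) 0 = Er i n)
    (S2 : ℕ → ℕ → ℝ)
    (hS2 : ∀ n k : ℕ,
      iteratedDeriv n (fun t : ℝ => (Real.exp t - 1) ^ k / (k.factorial : ℝ)) 0 = S2 n k)
    (i : ℕ) (hi : 1 ≤ i) (n : ℕ) :
    (2 : ℝ) ^ (-(i : ℤ)) * lam ^ n * Er i n =
      ∑ k ∈ Finset.range (n + 1), Blr i k * S2 n k :=
  higher_boole_euler_stirling2_general lam Blr hBlr Er hEr S2 hS2 i hi n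
end

section
/- Let λ be a nonzero real number, let Bl_n(λ) be the Boole numbers, E_k the Euler numbers, and S₁(n,k) the signed Stirling numbers of the first kind. Then for every integer n ≥ 0 one has Bl_n(λ) = (1/2)·Σ_{k=0}^{n} E_k·λ^k·S₁(n,k). -/
/-!
With `g u = 1 / (eᵘ + 1)`, the Boole generating function is `t ↦ g (λ log (1 + t))`, and
`2 g` is the Euler generating function. The `n`-th derivative of `x ↦ h (log x)` is
`x⁻ⁿ Σₖ s(n, k) h⁽ᵏ⁾(log x)`: differentiating once more turns the coefficients into those of
`(X)ₙ (X - n) = (X)ₙ₊₁`. At `x = 1` with `h u = g (λ u)` this gives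
`Bl n = Σₖ s(n, k) λᵏ g⁽ᵏ⁾(0) = ½ Σₖ s(n, k) λᵏ E k`.
-/

open Polynomial Finset Real
open scoped ContDiff

theorem Polynomial.coeff_eq_of_eval_eq_sum {R : Type*} [CommRing R] [IsDomain R] [Infinite R]
    {p : R[X]} {n : ℕ} {a : ℕ → R} (h : ∀ x, p.eval x = ∑ k ∈ range (n + 1), a k * x ^ k)
    {k : ℕ} (hk : k ∈ range (n + 1)) : p.coeff k = a k := by
  have hp : p = ∑ j ∈ range (n + 1), C (a j) * X ^ j :=
    Polynomial.funext fun x => by simp [h, eval_finsetSum]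
  simp [hp, hk]

theorem Polynomial.sum_range_coeff_mul_X_sub_C {R : Type*} [CommRing R] {p : R[X]} {n : ℕ}
    (hp : p.natDegree ≤ n) (r : R) (H : ℕ → R) :
    ∑ k ∈ range (n + 2), (p * (X - C r)).coeff k * H k =
      ∑ k ∈ range (n + 1), p.coeff k * H (k + 1) - r * ∑ k ∈ range (n + 1), p.coeff k * H k := by
  have hshift : ∑ k ∈ range (n + 1), p.coeff k * H k =
      ∑ k ∈ range (n + 1), p.coeff (k + 1) * H (k + 1) + p.coeff 0 * H 0 := by
    rw [← sum_range_succ' (fun k => p.coeff k * H k), sum_range_succ _ (n + 1),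
      coeff_eq_zero_of_natDegree_lt (Nat.lt_succ_of_le hp), zero_mul, add_zero]
  rw [sum_range_succ', hshift]
  simp only [coeff_mul_X_sub_C, mul_coeff_zero, coeff_sub, coeff_X_zero, coeff_C_zero, sub_mul,
    sum_sub_distrib, mul_add, mul_sum, mul_left_comm r, mul_assoc]
  ring

theorem hasDerivAt_iteratedDeriv_comp_log {h : ℝ → ℝ} (hh : ContDiff ℝ ∞ h) (k : ℕ) {t : ℝ}
    (ht : t ≠ 0) :
    HasDerivAt (fun x => iteratedDeriv k h (log x)) (iteratedDeriv (k + 1) h (log t) * t⁻¹) t := by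
  rw [iteratedDeriv_succ]
  have hdiff := hh.differentiable_iteratedDeriv k (mod_cast WithTop.coe_lt_top _)
  exact hdiff.differentiableAt.hasDerivAt.comp t (hasDerivAt_log ht)

theorem iteratedDeriv_comp_log {h : ℝ → ℝ} (hh : ContDiff ℝ ∞ h) (n : ℕ) {t : ℝ} (ht : 0 < t) :
    iteratedDeriv n (fun x => h (log x)) t =
      t ^ (-(n : ℤ)) * ∑ k ∈ range (n + 1),
        (descPochhammer ℝ n).coeff k * iteratedDeriv k h (log t) := by
  induction n generalizing t with
  | zero => simp
  | succ n ih =>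
    have hclosed : iteratedDeriv n (fun x => h (log x)) =ᶠ[nhds t] fun x => x ^ (-(n : ℤ)) *
        ∑ k ∈ range (n + 1), (descPochhammer ℝ n).coeff k * iteratedDeriv k h (log x) :=
      Filter.eventually_of_mem (Ioi_mem_nhds ht) fun x hx => ih hx
    have hpow := hasDerivAt_zpow (-(n : ℤ)) t (Or.inl ht.ne')
    have hsum : HasDerivAt (fun x => ∑ k ∈ range (n + 1),
        (descPochhammer ℝ n).coeff k * iteratedDeriv k h (log x))
        (∑ k ∈ range (n + 1), (descPochhammer ℝ n).coeff k *
          (iteratedDeriv (k + 1) h (log t) * t⁻¹)) t :=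
      HasDerivAt.fun_sum fun k _ => (hasDerivAt_iteratedDeriv_comp_log hh k ht.ne').const_mul _
    rw [iteratedDeriv_succ, hclosed.deriv_eq, (hpow.fun_mul hsum).deriv,
      descPochhammer_succ_right, ← C_eq_natCast,
      sum_range_coeff_mul_X_sub_C (descPochhammer_natDegree ℝ n).le]
    simp only [← mul_assoc, ← sum_mul]
    push_cast
    rw [zpow_sub₀ ht.ne', zpow_one, neg_add, zpow_add₀ ht.ne', zpow_neg_one]
    ring

theorem boole_euler_stirling1_general (lam : ℝ)
    (Bl : ℕ → ℝ)
    (hBl : ∀ n : ℕ, iteratedDeriv n (fun t : ℝ => 1 / ((1 + t) ^ lam + 1)) 0 = Bl n)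
    (E : ℕ → ℝ)
    (hE : ∀ n : ℕ, iteratedDeriv n (fun t : ℝ => 2 / (Real.exp t + 1)) 0 = E n)
    (S1 : ℕ → ℕ → ℝ)
    (hS1 : ∀ (n : ℕ) (x : ℝ),
      (descPochhammer ℝ n).eval x = ∑ k ∈ Finset.range (n + 1), S1 n k * x ^ k)
    (n : ℕ) :
    Bl n = (1 / 2 : ℝ) * ∑ k ∈ Finset.range (n + 1), E k * lam ^ k * S1 n k := by
  set g : ℝ → ℝ := fun u => 1 / (exp u + 1)
  have hg : ContDiff ℝ ∞ g :=
    contDiff_const.div (contDiff_exp.add contDiff_const) fun u => by positivity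
  have hBoole : (fun t : ℝ => 1 / ((1 + t) ^ lam + 1)) =ᶠ[nhds 0]
      fun t => g (lam * log (1 + t)) :=
    Filter.eventually_of_mem (Ioi_mem_nhds (by norm_num : (-1 : ℝ) < 0)) fun t ht => by
      simp only [g, rpow_def_of_pos (by linarith [ht.out] : (0 : ℝ) < 1 + t), mul_comm]
  have hg_scaled : ContDiff ℝ ∞ fun u => g (lam * u) := hg.comp (contDiff_const.mul contDiff_id)
  have hEuler (k : ℕ) : E k = 2 * iteratedDeriv k g 0 := by
    rw [← hE, ← iteratedDeriv_const_mul_field]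
    simp only [g, mul_one_div]
  rw [← hBl, hBoole.iteratedDeriv_eq,
    congrFun (iteratedDeriv_comp_const_add n (fun x => g (lam * log x)) 1) 0, add_zero,
    iteratedDeriv_comp_log hg_scaled n one_pos, one_zpow, one_mul, log_one, mul_sum]
  refine sum_congr rfl fun k hk => ?_
  rw [congrFun (iteratedDeriv_comp_const_mul (hg.of_le (mod_cast le_top)) lam) 0, mul_zero,
    hEuler, (descPochhammer ℝ n).coeff_eq_of_eval_eq_sum (hS1 n) hk]
  ring

/-- Let `λ ≠ 0`.  The Boole numbers `Bl n` are defined by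
`1/((1+t)^λ+1) = Σ Bl n · tⁿ/n!` (so `Bl n` is the `n`-th derivative at `0` of
`t ↦ 1/((1+t)^λ+1)`, real power), the Euler numbers `E n` by
`2/(eᵗ+1) = Σ E n · tⁿ/n!`, and the signed Stirling numbers of the first kind
`S1 n k` by `x(x-1)⋯(x-n+1) = Σ_{k=0}^{n} S1 n k · xᵏ` (the falling factorial
being `descPochhammer`).  Then for every `n ≥ 0`:
`Bl n = (1/2) Σ_{k=0}^{n} E k · λᵏ · S1 n k`. -/
theorem boole_euler_stirling1 (lam : ℝ) (hlam : lam ≠ 0)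
    (Bl : ℕ → ℝ)
    (hBl : ∀ n : ℕ, iteratedDeriv n (fun t : ℝ => 1 / ((1 + t) ^ lam + 1)) 0 = Bl n)
    (E : ℕ → ℝ)
    (hE : ∀ n : ℕ, iteratedDeriv n (fun t : ℝ => 2 / (Real.exp t + 1)) 0 = E n)
    (S1 : ℕ → ℕ → ℝ)
    (hS1 : ∀ (n : ℕ) (x : ℝ),
      (descPochhammer ℝ n).eval x = ∑ k ∈ Finset.range (n + 1), S1 n k * x ^ k)
    (n : ℕ) :
    Bl n = (1 / 2 : ℝ) * ∑ k ∈ Finset.range (n + 1), E k * lam ^ k * S1 n k :=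
  boole_euler_stirling1_general lam Bl hBl E hE S1 hS1 n
end

section
/- Let λ be a nonzero real number, let Bl_n^{(i)}(λ) be the higher-order Boole numbers, E_k^{(i)} the higher-order Euler numbers, and S₁(n,k) the signed Stirling numbers of the first kind. Then for every integer i ≥ 1 and every integer n ≥ 0 one has 2^i·Bl_n^{(i)}(λ) = Σ_{k=0}^{n} E_k^{(i)}·λ^k·S₁(n,k). -/
/-!
With `G u = (2 / (exp u + 1)) ^ i` one has `2 ^ i / ((1 + t) ^ λ + 1) ^ i = G (λ log (1 + t))`,
so the identity is a chain rule for this composition at `t = 0`. For the Euler operator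
`θ = (1 + t) d/dt` one has `θ ^ k (G ∘ λ log (1 + ·)) = λ ^ k G⁽ᵏ⁾ ∘ λ log (1 + ·)`, while
`(1 + t) ^ n (d/dt) ^ n = θ (θ - 1) ⋯ (θ - n + 1)`. Hence the `n`-th derivative is
`(1 + t) ^ (-n) ∑ₖ [xᵏ] (x)ₙ λᵏ G⁽ᵏ⁾ (λ log (1 + t))`, by induction on `n` from
`(x)ₙ₊₁ = (x)ₙ (x - n)`, and the coefficients `[xᵏ] (x)ₙ` are the `S₁(n, k)`.
-/

open Real Polynomial Finset
open scoped ContDiff Topology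

namespace Polynomial

variable {R : Type*} [CommRing R]

lemma coeff_descPochhammer_eq_zero_of_lt {n k : ℕ} (h : n < k) :
    (descPochhammer R n).coeff k = 0 := by
  rw [← descPochhammer_map (Int.castRingHom R)]
  exact coeff_eq_zero_of_natDegree_lt <|
    (natDegree_map_le).trans_lt ((descPochhammer_natDegree ℤ n).trans_lt h)

lemma sum_coeff_descPochhammer_succ_mul (n : ℕ) (a : ℕ → R) :
    ∑ k ∈ range (n + 2), (descPochhammer R (n + 1)).coeff k * a k =
      ∑ k ∈ range (n + 1), (descPochhammer R n).coeff k * (a (k + 1) - n * a k) := by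
  have hX : ∑ k ∈ range (n + 2), (descPochhammer R n * X).coeff k * a k =
      ∑ k ∈ range (n + 1), (descPochhammer R n).coeff k * a (k + 1) := by
    simp [sum_range_succ' _ (n + 1), coeff_mul_X]
  have hC : ∑ k ∈ range (n + 2), (descPochhammer R n * C (n : R)).coeff k * a k =
      ∑ k ∈ range (n + 1), (descPochhammer R n).coeff k * (n * a k) := by
    rw [sum_range_succ, coeff_mul_C, coeff_descPochhammer_eq_zero_of_lt n.lt_succ_self, zero_mul,
      zero_mul, add_zero]
    exact sum_congr rfl fun k _ => by rw [coeff_mul_C]; ring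
  rw [descPochhammer_succ_right, ← C_eq_natCast, mul_sub]
  simp only [coeff_sub, sub_mul, sum_sub_distrib, hX, hC, mul_sub]

lemma coeff_eq_of_forall_eval_eq_sum [IsDomain R] [Infinite R] {p : R[X]} {n : ℕ} {s : ℕ → R}
    (h : ∀ x, p.eval x = ∑ k ∈ range (n + 1), s k * x ^ k) {k : ℕ} (hk : k ≤ n) :
    p.coeff k = s k := by
  have hp : p = ∑ k ∈ range (n + 1), C (s k) * X ^ k :=
    Polynomial.funext fun x => by simp [h, eval_finsetSum]
  rw [hp, finsetSum_coeff]
  simp [Nat.lt_succ_of_le hk]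

end Polynomial

theorem ContDiff.hasDerivAt_iteratedDeriv_comp {𝕜 : Type*} [NontriviallyNormedField 𝕜]
    {G φ : 𝕜 → 𝕜} {φ' t : 𝕜} {k : ℕ} (hG : ContDiff 𝕜 (k + 1) G) (hφ : HasDerivAt φ φ' t) :
    HasDerivAt (fun s => iteratedDeriv k G (φ s)) (iteratedDeriv (k + 1) G (φ t) * φ') t := by
  rw [iteratedDeriv_succ]
  exact ((hG.differentiable_iteratedDeriv k (mod_cast k.lt_succ_self)) _).hasDerivAt.comp t hφ

theorem iteratedDeriv_comp_mul_log_one_add {G : ℝ → ℝ} (hG : ContDiff ℝ ∞ G) (c : ℝ) (n : ℕ)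
    {t : ℝ} (ht : -1 < t) :
    iteratedDeriv n (fun s => G (c * log (1 + s))) t =
      (∑ k ∈ range (n + 1), (descPochhammer ℝ n).coeff k *
        (c ^ k * iteratedDeriv k G (c * log (1 + t)))) * (1 + t) ^ (-(n : ℤ)) := by
  induction n generalizing t with
  | zero => simp
  | succ n ih =>
    have ht' : 1 + t ≠ 0 := by linarith
    have hlog : HasDerivAt (fun s => c * log (1 + s)) (c / (1 + t)) t := by
      simpa [div_eq_mul_inv] using (((hasDerivAt_id t).const_add 1).log ht').const_mul c
    have hsum : HasDerivAt (fun s => ∑ k ∈ range (n + 1), (descPochhammer ℝ n).coeff k *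
          (c ^ k * iteratedDeriv k G (c * log (1 + s))))
        ((∑ k ∈ range (n + 1), (descPochhammer ℝ n).coeff k *
          (c ^ (k + 1) * iteratedDeriv (k + 1) G (c * log (1 + t)))) / (1 + t)) t := by
      have hD k := (hG.of_le (mod_cast le_top)).hasDerivAt_iteratedDeriv_comp (k := k) hlog
      refine (HasDerivAt.fun_sum fun k _ =>
        ((hD k).const_mul (c ^ k)).const_mul ((descPochhammer ℝ n).coeff k)).congr_deriv ?_
      rw [sum_div]
      exact sum_congr rfl fun k _ => by ring
    have hpow : HasDerivAt (fun s : ℝ => (1 + s) ^ (-(n : ℤ)))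
        (-n * (1 + t) ^ (-(n : ℤ)) / (1 + t)) t := by
      refine ((hasDerivAt_zpow _ _ (Or.inl ht')).comp t
        ((hasDerivAt_id t).const_add 1)).congr_deriv ?_
      rw [zpow_sub_one₀ ht']
      push_cast
      ring
    have hev : iteratedDeriv n (fun s => G (c * log (1 + s))) =ᶠ[𝓝 t] fun s =>
        (∑ k ∈ range (n + 1), (descPochhammer ℝ n).coeff k *
          (c ^ k * iteratedDeriv k G (c * log (1 + s)))) * (1 + s) ^ (-(n : ℤ)) :=
      (eventually_gt_nhds ht).mono fun s hs => ih hs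
    rw [iteratedDeriv_succ, hev.deriv_eq,
      (hsum.fun_mul hpow).deriv, sum_coeff_descPochhammer_succ_mul]
    have hzpow : (1 + t) ^ (-((n + 1 : ℕ) : ℤ)) = (1 + t) ^ (-(n : ℤ)) / (1 + t) := by
      rw [Nat.cast_succ, neg_add, zpow_add₀ ht', zpow_neg_one, div_eq_mul_inv]
    simp only [hzpow, mul_sub, sum_sub_distrib, mul_left_comm _ (n : ℝ), ← mul_sum, pow_succ]
    ring

theorem higher_boole_euler_stirling1_general (lam : ℝ)
    (Blr : ℕ → ℕ → ℝ)
    (hBlr : ∀ r : ℕ, 1 ≤ r → ∀ n : ℕ,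
      iteratedDeriv n (fun t : ℝ => (1 / ((1 + t) ^ lam + 1)) ^ r) 0 = Blr r n)
    (Er : ℕ → ℕ → ℝ)
    (hEr : ∀ i : ℕ, 1 ≤ i → ∀ n : ℕ,
      iteratedDeriv n (fun t : ℝ => (2 / (Real.exp t + 1)) ^ i) 0 = Er i n)
    (S1 : ℕ → ℕ → ℝ)
    (hS1 : ∀ (n : ℕ) (x : ℝ),
      (descPochhammer ℝ n).eval x = ∑ k ∈ Finset.range (n + 1), S1 n k * x ^ k)
    (i : ℕ) (hi : 1 ≤ i) (n : ℕ) :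
    (2 : ℝ) ^ i * Blr i n = ∑ k ∈ Finset.range (n + 1), Er i k * lam ^ k * S1 n k := by
  set G : ℝ → ℝ := fun u => (2 / (exp u + 1)) ^ i
  have hG : ContDiff ℝ ∞ G :=
    (contDiff_const.div (contDiff_exp.add contDiff_const) fun u => by positivity).pow i
  have hGlog : (fun s => G (lam * log (1 + s))) =ᶠ[𝓝 0]
      fun s => 2 ^ i * (1 / ((1 + s) ^ lam + 1)) ^ i := by
    filter_upwards [eventually_gt_nhds (neg_one_lt_zero : (-1 : ℝ) < 0)] with s hs
    rw [← mul_pow, mul_one_div, rpow_def_of_pos (by linarith), mul_comm]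
  calc (2 : ℝ) ^ i * Blr i n = iteratedDeriv n (fun s => G (lam * log (1 + s))) 0 := by
        rw [(hGlog.iteratedDeriv n).eq_of_nhds, iteratedDeriv_const_mul_field, hBlr i hi n]
    _ = ∑ k ∈ range (n + 1), Er i k * lam ^ k * S1 n k := by
        rw [iteratedDeriv_comp_mul_log_one_add hG lam n neg_one_lt_zero, add_zero, log_one,
          mul_zero, one_zpow, mul_one]
        refine sum_congr rfl fun k hk => ?_
        rw [coeff_eq_of_forall_eval_eq_sum (hS1 n) (mem_range_succ_iff.mp hk), hEr i hi]
        ring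

/-- Let `λ ≠ 0`.  For `r ≥ 1` the higher-order Boole numbers
`Blr r n` are defined by `(1/((1+t)^λ+1))^r = Σ Blr r n · tⁿ/n!` (real power),
the higher-order Euler numbers `Er i n` by `(2/(eᵗ+1))ⁱ = Σ Er i n · tⁿ/n!`,
and the signed Stirling numbers of the first kind `S1 n k` by
`x(x-1)⋯(x-n+1) = Σ_{k=0}^{n} S1 n k · xᵏ`.  Then for all `i ≥ 1` and `n ≥ 0`:
`2ⁱ·Blr i n = Σ_{k=0}^{n} Er i k · λᵏ · S1 n k`. -/
theorem higher_boole_euler_stirling1 (lam : ℝ) (hlam : lam ≠ 0)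
    (Blr : ℕ → ℕ → ℝ)
    (hBlr : ∀ r : ℕ, 1 ≤ r → ∀ n : ℕ,
      iteratedDeriv n (fun t : ℝ => (1 / ((1 + t) ^ lam + 1)) ^ r) 0 = Blr r n)
    (Er : ℕ → ℕ → ℝ)
    (hEr : ∀ i : ℕ, 1 ≤ i → ∀ n : ℕ,
      iteratedDeriv n (fun t : ℝ => (2 / (Real.exp t + 1)) ^ i) 0 = Er i n)
    (S1 : ℕ → ℕ → ℝ)
    (hS1 : ∀ (n : ℕ) (x : ℝ),
      (descPochhammer ℝ n).eval x = ∑ k ∈ Finset.range (n + 1), S1 n k * x ^ k)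
    (i : ℕ) (hi : 1 ≤ i) (n : ℕ) :
    (2 : ℝ) ^ i * Blr i n = ∑ k ∈ Finset.range (n + 1), Er i k * lam ^ k * S1 n k :=
  higher_boole_euler_stirling1_general lam Blr hBlr Er hEr S1 hS1 i hi n
end
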